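/- Let Q be a forest poset. In the ring ℚ[[t]] of formal power series, let H := t + Σ_{n ≥ 2} c(n)·tⁿ where c(n) is the number of Q-alternating Schröder trees with n leaves, for each a ∈ Q let H^a := Σ_{n ≥ 2} c_a(n)·tⁿ where c_a(n) is the number of Q-alternating Schröder trees with n leaves whose root is labeled a, and let H̄^a := Σ_{b ∈ Q incomparable with a} H^b. Then H = t + Σ_{a ∈ Q} H^a, and for every a ∈ Q, H^a = (t + H̄^a)·(t + H̄^a + H^a). (For a forest poset Q, H is the Hilbert series of the operad As(Q).) -/

import Mathlib

open scoped Classical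

/-- A forest poset: for all `a b c`, if `a ≼ c` and `b ≼ c` then `a` and `b` are
comparable. -/
def IsForestPoset (Q : Type*) [PartialOrder Q] : Prop :=
  ∀ a b c : Q, a ≤ c → b ≤ c → a ≤ b ∨ b ≤ a

/-- Planar rooted trees with internal nodes labeled by `Q` and an arbitrary (finite)
list of children.  `Q`-Schröder trees are those satisfying `SchWF` below. -/
inductive SchTree (Q : Type*) where
  | leaf : SchTree Q
  | node : Q → List (SchTree Q) → SchTree Q

/-- Well-formedness for `Q`-Schröder trees: every internal node has at least two
children. -/
inductive SchWF {Q : Type*} : SchTree Q → Prop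
  | leaf : SchWF .leaf
  | node (a : Q) (ts : List (SchTree Q)) :
      2 ≤ ts.length → (∀ t ∈ ts, SchWF t) → SchWF (.node a ts)

/-- A tree is `Q`-alternating if whenever an internal node labeled `a` has an
internal-node child labeled `b`, the elements `a` and `b` are incomparable in `Q`. -/
inductive Alt {Q : Type*} [PartialOrder Q] : SchTree Q → Prop
  | leaf : Alt .leaf
  | node (a : Q) (ts : List (SchTree Q)) :
      (∀ t ∈ ts, Alt t) →
      (∀ (b : Q) (cs : List (SchTree Q)), SchTree.node b cs ∈ ts → ¬ a ≤ b ∧ ¬ b ≤ a) →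
      Alt (.node a ts)

/-- The root label of a Schröder tree, `none` for a leaf. -/
def schRoot {Q : Type*} : SchTree Q → Option Q
  | .leaf => none
  | .node a _ => some a

mutual
  /-- The number of leaves of a Schröder tree. -/
  def schLeaves {Q : Type*} : SchTree Q → ℕ
    | .leaf => 1
    | .node _ ts => schLeavesList ts

  /-- Total number of leaves of a list of Schröder trees. -/
  def schLeavesList {Q : Type*} : List (SchTree Q) → ℕ
    | [] => 0
    | t :: ts => schLeaves t + schLeavesList ts
end

variable (Q : Type*) [Fintype Q] [PartialOrder Q]

/-- `c(n)`: the number of `Q`-alternating Schröder trees with `n` leaves. -/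
noncomputable def cAll (n : ℕ) : ℕ :=
  Set.ncard {s : SchTree Q | SchWF s ∧ Alt s ∧ schLeaves s = n}

/-- `c_a(n)`: the number of `Q`-alternating Schröder trees with `n` leaves whose root is
labeled `a`. -/
noncomputable def cRoot (a : Q) (n : ℕ) : ℕ :=
  Set.ncard {s : SchTree Q | SchWF s ∧ Alt s ∧ schRoot s = some a ∧ schLeaves s = n}

/-- The series `H = t + Σ_{n ≥ 2} c(n)·tⁿ ∈ ℚ[[t]]` (the Hilbert series of `As(Q)` when
`Q` is a forest poset). -/
noncomputable def Hser : PowerSeries ℚ :=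
  PowerSeries.mk fun n => if n = 1 then 1 else if 2 ≤ n then (cAll Q n : ℚ) else 0

/-- The series `H^a = Σ_{n ≥ 2} c_a(n)·tⁿ ∈ ℚ[[t]]`. -/
noncomputable def Hroot (a : Q) : PowerSeries ℚ :=
  PowerSeries.mk fun n => if 2 ≤ n then (cRoot Q a n : ℚ) else 0

/-- The series `H̄^a = Σ_{b incomparable with a} H^b`. -/
noncomputable def Hbar (a : Q) : PowerSeries ℚ :=
  ∑ b ∈ Finset.univ.filter (fun b : Q => ¬ a ≤ b ∧ ¬ b ≤ a), Hroot Q b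

/-!
An `a`-rooted alternating tree has at least two children, each a leaf or a tree whose root is
incomparable with `a`. Splitting off its first child `u` and keeping the rest — the single
remaining child `v`, or the `a`-rooted tree formed by the remaining children — is a
leaf-additive bijection onto pairs `(u, v)` where `u` is of the first kind and `v` is of the
first kind or `a`-rooted. On generating series this reads `H^a = (t + H̄^a)(t + H̄^a + H^a)`;
sorting all trees by their root gives `H = t + Σ_a H^a`.
-/

open PowerSeries

section GeneratingSeries

open Finset.HasAntidiagonal

variable {α β ι : Type*}

noncomputable def genSeries (w : α → ℕ) (S : Set α) : ℚ⟦X⟧ :=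
  mk fun n => ((S ∩ w ⁻¹' {n}).ncard : ℚ)

@[simp]
lemma coeff_genSeries (w : α → ℕ) (S : Set α) (n : ℕ) :
    coeff n (genSeries w S) = ((S ∩ w ⁻¹' {n}).ncard : ℚ) :=
  coeff_mk _ _

lemma genSeries_singleton (w : α → ℕ) (x : α) : genSeries w {x} = X ^ w x := by
  ext n
  rw [coeff_genSeries, coeff_X_pow]
  by_cases h : w x = n
  · have hx : ({x} ∩ w ⁻¹' {n} : Set α) = {x} := Set.inter_eq_left.mpr (by simpa using h)
    simp [hx, h]
  · have hx : ({x} ∩ w ⁻¹' {n} : Set α) = ∅ := Set.singleton_inter_eq_empty.mpr h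
    simp [hx, Ne.symm h]

lemma genSeries_union {w : α → ℕ} {S T : Set α} (hST : Disjoint S T)
    (hS : ∀ n, (S ∩ w ⁻¹' {n}).Finite) (hT : ∀ n, (T ∩ w ⁻¹' {n}).Finite) :
    genSeries w (S ∪ T) = genSeries w S + genSeries w T := by
  ext n
  rw [map_add, coeff_genSeries, coeff_genSeries, coeff_genSeries, Set.union_inter_distrib_right,
    Set.ncard_union_eq (hST.mono Set.inter_subset_left Set.inter_subset_left) (hS n) (hT n),
    Nat.cast_add]

lemma genSeries_biUnion {w : α → ℕ} (F : Finset ι) {S : ι → Set α}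
    (hS : (F : Set ι).PairwiseDisjoint S)
    (hfin : ∀ i ∈ F, ∀ n, (S i ∩ w ⁻¹' {n}).Finite) :
    genSeries w (⋃ i ∈ F, S i) = ∑ i ∈ F, genSeries w (S i) := by
  ext n
  rw [coeff_genSeries, map_sum, Set.iUnion₂_inter, ← Finset.set_biUnion_coe,
    F.finite_toSet.ncard_biUnion (fun i hi => hfin i hi n)
      (hS.mono fun i => Set.inter_subset_left), finsum_mem_coe_finset, Nat.cast_sum]
  simp only [coeff_genSeries]

lemma genSeries_image {γ : Type*} (w : γ → ℕ) {f : α → γ} {D : Set α} (hf : D.InjOn f) :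
    genSeries w (f '' D) = genSeries (w ∘ f) D := by
  ext n
  rw [coeff_genSeries, coeff_genSeries, ← (hf.mono Set.inter_subset_left).ncard_image,
    Set.preimage_comp, Set.image_inter_preimage]

lemma genSeries_prod {w : α → ℕ} {v : β → ℕ} {S : Set α} {T : Set β}
    (hS : ∀ n, (S ∩ w ⁻¹' {n}).Finite) (hT : ∀ n, (T ∩ v ⁻¹' {n}).Finite) :
    genSeries (fun p => w p.1 + v p.2) (S ×ˢ T) = genSeries w S * genSeries v T := by
  ext n
  have hfibre : (S ×ˢ T) ∩ (fun p => w p.1 + v p.2) ⁻¹' {n} =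
      ⋃ ij ∈ (antidiagonal n : Set (ℕ × ℕ)),
        (S ∩ w ⁻¹' {ij.1}) ×ˢ (T ∩ v ⁻¹' {ij.2}) := by
    ext ⟨x, y⟩
    simp [and_assoc]
  have hdisj : (antidiagonal n : Set (ℕ × ℕ)).PairwiseDisjoint
      fun ij => (S ∩ w ⁻¹' {ij.1}) ×ˢ (T ∩ v ⁻¹' {ij.2}) := by
    rintro ⟨i, j⟩ - ⟨i', j'⟩ - hne
    refine Set.disjoint_left.mpr fun ⟨x, y⟩ h h' => hne ?_
    simp only [Set.mem_prod, Set.mem_inter_iff, Set.mem_preimage, Set.mem_singleton_iff] at h h'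
    rw [← h.1.2, ← h.2.2, h'.1.2, h'.2.2]
  rw [coeff_genSeries, coeff_mul, hfibre,
    (antidiagonal n).finite_toSet.ncard_biUnion (fun ij _ => (hS _).prod (hT _)) hdisj,
    finsum_mem_coe_finset, Nat.cast_sum]
  simp only [Set.ncard_prod, Nat.cast_mul, coeff_genSeries]

end GeneratingSeries

lemma finite_setOf_length_le_forall_mem {α : Type*} {s : Set α} (hs : s.Finite) (n : ℕ) :
    {l : List α | l.length ≤ n ∧ ∀ x ∈ l, x ∈ s}.Finite := by
  have := hs.to_subtype
  refine ((List.finite_length_le s n).image (List.map Subtype.val)).subset ?_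
  rintro l ⟨hlen, hmem⟩
  exact ⟨l.pmap Subtype.mk hmem, by simpa using hlen, by simp [List.map_pmap]⟩

section Trees

variable {Q : Type*}

lemma schLeavesList_eq_sum (ts : List (SchTree Q)) :
    schLeavesList ts = (ts.map schLeaves).sum := by
  induction ts with
  | nil => rfl
  | cons t ts ih => rw [List.map_cons, List.sum_cons, ← ih]; rfl

lemma schLeaves_pos {s : SchTree Q} (h : SchWF s) : 1 ≤ schLeaves s := by
  induction h with
  | leaf => exact le_rfl
  | node a ts hlen _ ih =>
    obtain ⟨t, ht⟩ := List.exists_mem_of_length_pos (by omega : 0 < ts.length)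
    calc 1 ≤ schLeaves t := ih t ht
      _ ≤ schLeavesList ts := by
        rw [schLeavesList_eq_sum]; exact List.le_sum_of_mem (List.mem_map_of_mem ht)

lemma length_le_schLeavesList {ts : List (SchTree Q)} (h : ∀ t ∈ ts, SchWF t) :
    ts.length ≤ schLeavesList ts := by
  rw [schLeavesList_eq_sum, ← List.length_map schLeaves]
  exact List.length_le_sum_of_one_le _ (by simpa using fun t ht => schLeaves_pos (h t ht))

lemma schLeaves_lt_schLeavesList {t : SchTree Q} {ts : List (SchTree Q)}
    (hlen : 2 ≤ ts.length) (h : ∀ t ∈ ts, SchWF t) (ht : t ∈ ts) :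
    schLeaves t < schLeavesList ts := by
  have hrest := length_le_schLeavesList (ts := ts.erase t) fun s hs =>
    h s (List.mem_of_mem_erase hs)
  rw [List.length_erase_of_mem ht] at hrest
  rw [schLeavesList_eq_sum, ((List.perm_cons_erase ht).map schLeaves).sum_eq, List.map_cons,
    List.sum_cons, ← schLeavesList_eq_sum]
  omega

lemma two_le_schLeaves_node {a : Q} {ts : List (SchTree Q)} (h : SchWF (.node a ts)) :
    2 ≤ schLeaves (.node a ts) := by
  cases h with
  | node _ _ hlen hwf => exact hlen.trans (length_le_schLeavesList hwf)

lemma finite_setOf_schWF_schLeaves_eq [Finite Q] (n : ℕ) :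
    {s : SchTree Q | SchWF s ∧ schLeaves s = n}.Finite := by
  induction n using Nat.strong_induction_on with
  | _ n ih =>
  set S := ⋃ m < n, {s : SchTree Q | SchWF s ∧ schLeaves s = m}
  have hS : S.Finite := (Set.finite_lt_nat n).biUnion fun m hm => ih m hm
  refine ((Set.finite_singleton .leaf).union (((Set.finite_univ (α := Q)).prod
    (finite_setOf_length_le_forall_mem hS n)).image fun p => .node p.1 p.2)).subset ?_
  rintro (_ | ⟨a, ts⟩) ⟨hwf, rfl⟩
  · exact Or.inl rfl
  · cases hwf with
    | node _ _ hlen hwf =>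
    refine Or.inr ⟨(a, ts), ⟨trivial, length_le_schLeavesList hwf, fun t ht => ?_⟩, rfl⟩
    exact Set.mem_biUnion (schLeaves_lt_schLeavesList hlen hwf ht) ⟨hwf t ht, rfl⟩

end Trees

section Grafting

variable {Q : Type*} [DecidableEq Q]

/-- The children that `v` contributes when grafted below an `a`-labeled node: an `a`-labeled
root of `v` is merged into that node. -/
def flattenAt (a : Q) : SchTree Q → List (SchTree Q)
  | .leaf => [.leaf]
  | .node b cs => if b = a then cs else [.node b cs]

def unflattenAt (a : Q) : List (SchTree Q) → SchTree Q
  | [t] => t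
  | ts => .node a ts

def graft (a : Q) (p : SchTree Q × SchTree Q) : SchTree Q :=
  .node a (p.1 :: flattenAt a p.2)

def ungraft (a : Q) : SchTree Q → SchTree Q × SchTree Q
  | .node _ (u :: ts) => (u, unflattenAt a ts)
  | _ => (.leaf, .leaf)

lemma schLeaves_graft (a : Q) (p : SchTree Q × SchTree Q) :
    schLeaves (graft a p) = schLeaves p.1 + schLeaves p.2 := by
  obtain ⟨u, _ | ⟨b, cs⟩⟩ := p
  · rfl
  · show schLeaves u + schLeavesList (flattenAt a (.node b cs)) = _
    by_cases hb : b = a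
    · simp only [flattenAt, if_pos hb]; rfl
    · simp only [flattenAt, if_neg hb]; rfl

lemma unflattenAt_flattenAt (a : Q) {v : SchTree Q} (hv : SchWF v) :
    unflattenAt a (flattenAt a v) = v := by
  rcases hv with _ | ⟨b, cs, hlen, -⟩
  · rfl
  · by_cases hb : b = a
    · subst hb
      match cs, hlen with
      | _ :: _ :: _, _ => simp [flattenAt, unflattenAt]
    · simp [flattenAt, unflattenAt, hb]

end Grafting

section Alternating

variable {Q : Type*} [PartialOrder Q]

/-- The possible roots of a child of an `a`-labeled node in an alternating tree. -/
def AdmissibleBelow (a : Q) : Option Q → Prop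
  | none => True
  | some b => ¬ a ≤ b ∧ ¬ b ≤ a

def altTrees (P : Option Q → Prop) : Set (SchTree Q) :=
  {s | SchWF s ∧ Alt s ∧ P (schRoot s)}

lemma not_admissibleBelow_self (a : Q) : ¬ AdmissibleBelow a (some a) :=
  fun h => h.1 le_rfl

lemma alt_node_iff {a : Q} {ts : List (SchTree Q)} :
    Alt (.node a ts) ↔ ∀ t ∈ ts, Alt t ∧ AdmissibleBelow a (schRoot t) := by
  constructor
  · rintro (_ | ⟨_, _, halt, hinc⟩) t ht
    refine ⟨halt t ht, ?_⟩
    cases t with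
    | leaf => trivial
    | node b cs => exact hinc b cs ht
  · intro h
    exact .node a ts (fun t ht => (h t ht).1) fun b cs hb => (h _ hb).2

lemma node_mem_altTrees_iff {a : Q} {ts : List (SchTree Q)} :
    .node a ts ∈ altTrees (· = some a) ↔
      2 ≤ ts.length ∧ ∀ t ∈ ts, t ∈ altTrees (AdmissibleBelow a) := by
  simp only [altTrees, Set.mem_ofPred_eq, schRoot, and_true, alt_node_iff]
  constructor
  · rintro ⟨_ | ⟨_, _, hlen, hwf⟩, halt⟩
    exact ⟨hlen, fun t ht => ⟨hwf t ht, halt t ht⟩⟩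
  · rintro ⟨hlen, h⟩
    exact ⟨.node a ts hlen fun t ht => (h t ht).1, fun t ht => (h t ht).2⟩

lemma exists_eq_node_of_mem_altTrees {a : Q} {s : SchTree Q} (hs : s ∈ altTrees (· = some a)) :
    ∃ cs, s = .node a cs := by
  rcases s with _ | ⟨b, cs⟩
  · exact absurd hs.2.2 (by simp [schRoot])
  · exact ⟨cs, by simpa [schRoot] using hs.2.2⟩

lemma unflattenAt_mem {a : Q} {ts : List (SchTree Q)} (hts : ts ≠ [])
    (h : ∀ t ∈ ts, t ∈ altTrees (AdmissibleBelow a)) :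
    unflattenAt a ts ∈ altTrees (AdmissibleBelow a) ∪ altTrees (· = some a) := by
  match ts, hts with
  | [t], _ => exact Or.inl (h t (List.mem_singleton_self t))
  | t :: u :: ts, _ => exact Or.inr (node_mem_altTrees_iff.mpr ⟨by simp, h⟩)

variable [DecidableEq Q]

lemma flattenAt_unflattenAt (a : Q) {ts : List (SchTree Q)} (hts : ts ≠ [])
    (h : ∀ t ∈ ts, t ∈ altTrees (AdmissibleBelow a)) :
    flattenAt a (unflattenAt a ts) = ts := by
  match ts, hts with
  | [.leaf], _ => rfl
  | [.node b cs], _ =>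
    have hb : b ≠ a := by
      rintro rfl; exact not_admissibleBelow_self b (h _ (List.mem_singleton_self _)).2.2
    simp [unflattenAt, flattenAt, hb]
  | _ :: _ :: _, _ => simp [unflattenAt, flattenAt]

lemma flattenAt_mem {a : Q} {v : SchTree Q}
    (hv : v ∈ altTrees (AdmissibleBelow a) ∪ altTrees (· = some a)) :
    flattenAt a v ≠ [] ∧ ∀ t ∈ flattenAt a v, t ∈ altTrees (AdmissibleBelow a) := by
  rcases hv with hv | hv
  · have hflat : flattenAt a v = [v] := by
      rcases v with _ | ⟨b, cs⟩
      · rfl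
      · have hb : b ≠ a := by rintro rfl; exact not_admissibleBelow_self b hv.2.2
        simp [flattenAt, hb]
    simpa [hflat] using hv
  · obtain ⟨cs, rfl⟩ := exists_eq_node_of_mem_altTrees hv
    obtain ⟨hlen, hcs⟩ := node_mem_altTrees_iff.mp hv
    rw [flattenAt, if_pos rfl]
    exact ⟨List.ne_nil_of_length_pos (by omega), hcs⟩

lemma graft_bijOn (a : Q) :
    Set.BijOn (graft a)
      (altTrees (AdmissibleBelow a) ×ˢ (altTrees (AdmissibleBelow a) ∪ altTrees (· = some a)))
      (altTrees (· = some a)) := by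
  refine Set.InvOn.bijOn (f' := ungraft a) ⟨?_, ?_⟩ ?_ ?_
  · rintro ⟨u, v⟩ ⟨-, hv⟩
    have hv_wf : SchWF v := by rcases hv with hv | hv <;> exact hv.1
    simp [graft, ungraft, unflattenAt_flattenAt a hv_wf]
  · intro s hs
    obtain ⟨cs, rfl⟩ := exists_eq_node_of_mem_altTrees hs
    obtain ⟨hlen, hcs⟩ := node_mem_altTrees_iff.mp hs
    match cs, hlen with
    | u :: t :: ts, _ =>
      simp only [ungraft, graft]
      rw [flattenAt_unflattenAt a (List.cons_ne_nil t ts) fun x hx => hcs x (by simp [hx])]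
  · rintro ⟨u, v⟩ ⟨hu, hv⟩
    obtain ⟨hne, hflat⟩ := flattenAt_mem hv
    refine node_mem_altTrees_iff.mpr ⟨?_, ?_⟩
    · simpa [graft, Nat.one_le_iff_ne_zero] using hne
    · simpa [graft, hu] using hflat
  · intro s hs
    obtain ⟨cs, rfl⟩ := exists_eq_node_of_mem_altTrees hs
    obtain ⟨hlen, hcs⟩ := node_mem_altTrees_iff.mp hs
    match cs, hlen with
    | u :: t :: ts, _ =>
      exact ⟨hcs u (by simp),
        unflattenAt_mem (List.cons_ne_nil t ts) fun x hx => hcs x (by simp [hx])⟩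

end Alternating

section Series

variable {Q : Type*} [PartialOrder Q]

lemma finite_altTrees_inter_schLeaves [Finite Q] (P : Option Q → Prop) (n : ℕ) :
    (altTrees P ∩ schLeaves ⁻¹' {n}).Finite :=
  (finite_setOf_schWF_schLeaves_eq n).subset fun _ hs => ⟨hs.1.1, hs.2⟩

lemma genSeries_altTrees_some_eq_mul [Finite Q] (a : Q) :
    genSeries schLeaves (altTrees (· = some a)) =
      genSeries schLeaves (altTrees (AdmissibleBelow a)) *
        (genSeries schLeaves (altTrees (AdmissibleBelow a)) +
          genSeries schLeaves (altTrees (· = some a))) := by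
  have hfin := finite_altTrees_inter_schLeaves (Q := Q)
  have hdisj : Disjoint (altTrees (AdmissibleBelow a)) (altTrees (· = some a)) :=
    Set.disjoint_left.mpr fun s hU hA => not_admissibleBelow_self a (hA.2.2 ▸ hU.2.2)
  have hsum : schLeaves ∘ graft a = fun p => schLeaves p.1 + schLeaves p.2 :=
    funext (schLeaves_graft a)
  have hfin_union (n : ℕ) : ((altTrees (AdmissibleBelow a) ∪ altTrees (· = some a)) ∩
      schLeaves ⁻¹' {n}).Finite := by
    rw [Set.union_inter_distrib_right]
    exact (hfin _ n).union (hfin _ n)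
  rw [← genSeries_union hdisj (hfin _) (hfin _), ← genSeries_prod (hfin _) hfin_union,
    ← hsum, ← genSeries_image _ (graft_bijOn a).injOn, (graft_bijOn a).image_eq]

lemma Hroot_eq_genSeries (a : Q) : Hroot Q a = genSeries schLeaves (altTrees (· = some a)) := by
  ext n
  rw [Hroot, coeff_mk, coeff_genSeries]
  split_ifs with hn
  · rw [cRoot]
    congr 2
    ext s
    simp [altTrees, and_assoc]
  · have hempty : altTrees (· = some a) ∩ schLeaves ⁻¹' {n} = ∅ := by
      refine Set.eq_empty_of_forall_notMem fun s ⟨hs, hleaves⟩ => hn ?_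
      obtain ⟨cs, rfl⟩ := exists_eq_node_of_mem_altTrees hs
      exact hleaves ▸ two_le_schLeaves_node hs.1
    simp [hempty]

variable [Fintype Q]

lemma altTrees_eq_union {P : Option Q → Prop} (hP : P none) :
    altTrees P =
      {.leaf} ∪ ⋃ b ∈ Finset.univ.filter (fun b => P (some b)), altTrees (· = some b) := by
  ext (_ | ⟨b, cs⟩)
  · simpa [altTrees, schRoot] using ⟨SchWF.leaf, Alt.leaf, hP⟩
  · simp [altTrees, schRoot]

lemma genSeries_altTrees {P : Option Q → Prop} (hP : P none) :
    genSeries schLeaves (altTrees P) =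
      X + ∑ b ∈ Finset.univ.filter (fun b => P (some b)),
        genSeries schLeaves (altTrees (· = some b)) := by
  set F := Finset.univ.filter (fun b => P (some b))
  have hleaf : Disjoint {.leaf} (⋃ b ∈ F, altTrees (· = some b)) := by
    simp [altTrees, schRoot]
  have hroots : (F : Set Q).PairwiseDisjoint fun b => altTrees (· = some b) := fun b _ c _ hbc =>
    Set.disjoint_left.mpr fun s hb hc => hbc (Option.some_injective _ (hb.2.2.symm.trans hc.2.2))
  have hrest (n : ℕ) : ((⋃ b ∈ F, altTrees (· = some b)) ∩ schLeaves ⁻¹' {n}).Finite :=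
    (finite_altTrees_inter_schLeaves P n).subset
      (Set.inter_subset_inter_left _ (altTrees_eq_union hP ▸ Set.subset_union_right))
  rw [altTrees_eq_union hP,
    genSeries_union hleaf (fun n => (Set.toFinite _).inter_of_left _) hrest, genSeries_singleton,
    genSeries_biUnion F hroots fun b _ => finite_altTrees_inter_schLeaves _, schLeaves, pow_one]

lemma Hser_eq_X_add_sum_Hroot : Hser Q = X + ∑ a : Q, Hroot Q a := by
  have hall := genSeries_altTrees (P := fun _ : Option Q => True) trivial
  simp only [Finset.filter_true, ← Hroot_eq_genSeries] at hall
  ext n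
  rw [Hser, coeff_mk]
  split_ifs with h1 h2
  · simp [h1, Hroot]
  · rw [← hall, coeff_genSeries, cAll]
    congr 2
    ext s
    simp [altTrees, and_assoc]
  · simp [Hroot, coeff_X, h1, h2]

lemma X_add_Hbar_eq_genSeries (a : Q) :
    X + Hbar Q a = genSeries schLeaves (altTrees (AdmissibleBelow a)) := by
  rw [genSeries_altTrees trivial, Hbar]
  congr 1
  exact Finset.sum_congr (Finset.filter_congr fun _ _ => Iff.rfl) fun b _ => Hroot_eq_genSeries b

end Series

/-- For a forest poset `Q`: `H = t + Σ_{a ∈ Q} H^a`, and for every `a ∈ Q`,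
`H^a = (t + H̄^a) · (t + H̄^a + H^a)`. -/
theorem hilbert_series_functional_equation (hQ : IsForestPoset Q) :
    (Hser Q = PowerSeries.X + ∑ a : Q, Hroot Q a) ∧
    ∀ a : Q, Hroot Q a =
      (PowerSeries.X + Hbar Q a) * (PowerSeries.X + Hbar Q a + Hroot Q a) := by
  refine ⟨Hser_eq_X_add_sum_Hroot, fun a => ?_⟩
  rw [X_add_Hbar_eq_genSeries, Hroot_eq_genSeries]
  exact genSeries_altTrees_some_eq_mul a
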